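/- arXiv:1106.5530 — 6 statements merged into one kernel-verified Lean document; each statement's English description precedes it below -/
import Mathlib

section
/- Let p be a prime with p ≠ 2, 13, and suppose y ∈ 𝔽_p satisfies y^8 + 360y^4 - 48 = 0. Set x = -(1/208)(y^6 + 388y^2). Then x^4 + 6x^2 - 3 = 0 and y^2 = x^3 - x. (Here 208 is invertible in 𝔽_p; note p ≠ 13 is needed since 13 ∣ 208, and in fact y^8+360y^4-48 has no root in 𝔽_13.) -/
theorem stmt_1 (p : ℕ) (hp : p.Prime) (hp2 : p ≠ 2) (hp13 : p ≠ 13) (y : ZMod p)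
    (hy : y ^ 8 + 360 * y ^ 4 - 48 = 0) :
    (-(208 : ZMod p)⁻¹ * (y ^ 6 + 388 * y ^ 2)) ^ 4
        + 6 * (-(208 : ZMod p)⁻¹ * (y ^ 6 + 388 * y ^ 2)) ^ 2 - 3 = 0
      ∧ y ^ 2 = (-(208 : ZMod p)⁻¹ * (y ^ 6 + 388 * y ^ 2)) ^ 3
        - (-(208 : ZMod p)⁻¹ * (y ^ 6 + 388 * y ^ 2)) := by
  haveI : Fact p.Prime := ⟨hp⟩
  have h208 : (208 : ZMod p) ≠ 0 := by
    have : ((208 : ℕ) : ZMod p) ≠ 0 := by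
      rw [Ne, ZMod.natCast_eq_zero_iff]
      intro hd
      have h2 : (208 : ℕ) = 2 ^ 4 * 13 := by norm_num
      rw [h2] at hd
      rcases hp.dvd_mul.mp hd with h | h
      · exact hp2 ((Nat.prime_dvd_prime_iff_eq hp Nat.prime_two).mp
          (hp.dvd_of_dvd_pow h))
      · exact hp13 ((Nat.prime_dvd_prime_iff_eq hp (by norm_num)).mp h)
    simpa using this
  constructor
  · field_simp
    linear_combination (y ^ 16 + 1192 * y ^ 12 + 474192 * y ^ 8
      + 63251968 * y ^ 4 + 116985856) * hy
  · field_simp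
    linear_combination (y ^ 10 + 804 * y ^ 6 + 162240 * y ^ 2) * hy
end

section
/- A prime p with p ≡ 1 (mod 12) has exactly 0 or exactly 4 roots of the polynomial d^4 + 6d^2 - 3 in 𝔽_p. More precisely: since (-3+√12)(-3-√12) = -3 is a square in 𝔽_p when p ≡ 1 (mod 12), the two equations d^2 = -3 + s and d^2 = -3 - s (where s^2 = 12) either both have solutions or neither does. -/
theorem stmt_4 (p : ℕ) (hp : p.Prime) (hp12 : p % 12 = 1) (s : ZMod p) (hs : s ^ 2 = 12) :
    ({d : ZMod p | d ^ 4 + 6 * d ^ 2 - 3 = 0}.ncard = 0 ∨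
      {d : ZMod p | d ^ 4 + 6 * d ^ 2 - 3 = 0}.ncard = 4) ∧
    ((∃ d : ZMod p, d ^ 2 = -3 + s) ↔ (∃ d : ZMod p, d ^ 2 = -3 - s)) := by
  haveI := Fact.mk hp
  have hp2le : 2 ≤ p := hp.two_le
  have hple : ∀ n : ℕ, p ∣ n → n ≠ 0 → p ≤ n := fun n h hn => Nat.le_of_dvd (Nat.pos_of_ne_zero hn) h
  have h2 : (2 : ZMod p) ≠ 0 := by
    have : ((2 : ℕ) : ZMod p) ≠ 0 := by
      rw [Ne, CharP.cast_eq_zero_iff (ZMod p) p]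
      intro h; have := hple 2 h (by norm_num); omega
    simpa using this
  have h3 : (3 : ZMod p) ≠ 0 := by
    have : ((3 : ℕ) : ZMod p) ≠ 0 := by
      rw [Ne, CharP.cast_eq_zero_iff (ZMod p) p]
      intro h; have := hple 3 h (by norm_num); omega
    simpa using this
  have h12 : (12 : ZMod p) ≠ 0 := by
    have : ((12 : ℕ) : ZMod p) ≠ 0 := by
      rw [Ne, CharP.cast_eq_zero_iff (ZMod p) p]
      intro h; have := hple 12 h (by norm_num); omega
    simpa using this
  have hs0 : s ≠ 0 := by
    intro h; apply h12; rw [← hs, h]; ring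
  have ha : (-3 + s : ZMod p) ≠ 0 := by
    intro h
    have hs3 : s = 3 := by linear_combination h
    rw [hs3] at hs
    apply h3
    linear_combination -hs
  have hb : (-3 - s : ZMod p) ≠ 0 := by
    intro h
    have hs3 : s = -3 := by linear_combination -h
    rw [hs3] at hs
    apply h3
    linear_combination -hs
  have hsne : s ≠ -s := by
    intro h
    apply hs0
    have h2s : (2 : ZMod p) * s = 0 := by linear_combination h
    rcases mul_eq_zero.mp h2s with h' | h'
    · exact absurd h' h2
    · exact h'
  -- key lemma: if x is a nonzero square and x*y is a square, then y is a square
  have key : ∀ x y : ZMod p, x ≠ 0 → (∃ d, d ^ 2 = x * y) → (∃ d, d ^ 2 = x) →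
      ∃ d : ZMod p, d ^ 2 = y := by
    rintro x y hx ⟨e, he⟩ ⟨f, hf⟩
    have hf0 : f ≠ 0 := by
      intro h; apply hx; rw [← hf, h]; ring
    refine ⟨e / f, ?_⟩
    field_simp
    linear_combination he - y * hf
  -- -3 is a square
  have hneg3 : ∃ d : ZMod p, d ^ 2 = -3 := by
    have hm1 : IsSquare (-1 : ZMod p) := by
      rw [ZMod.exists_sq_eq_neg_one_iff]
      omega
    obtain ⟨i, hi⟩ := hm1
    have ht : (s * 2⁻¹) ^ 2 = 3 := by
      have h2' : (2 : ZMod p) * 2⁻¹ = 1 := mul_inv_cancel₀ h2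
      linear_combination 2⁻¹ ^ 2 * hs + (3 * (2 * 2⁻¹) + 3) * h2'
    exact ⟨i * (s * 2⁻¹), by linear_combination i ^ 2 * ht - 3 * hi⟩
  have hm : (-3 + s) * (-3 - s) = (-3 : ZMod p) := by linear_combination -hs
  have hiff : (∃ d : ZMod p, d ^ 2 = -3 + s) ↔ (∃ d : ZMod p, d ^ 2 = -3 - s) := by
    constructor
    · intro h
      refine key (-3 + s) (-3 - s) ha ?_ h
      rw [hm]; exact hneg3
    · intro h
      refine key (-3 - s) (-3 + s) hb ?_ h
      rw [mul_comm, hm]; exact hneg3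
  refine ⟨?_, hiff⟩
  by_cases hex : ∃ d : ZMod p, d ^ 2 = -3 + s
  · right
    obtain ⟨d₁, hd₁⟩ := hex
    obtain ⟨d₂, hd₂⟩ := hiff.mp ⟨d₁, hd₁⟩
    have hd₁0 : d₁ ≠ 0 := by
      intro h; apply ha; rw [← hd₁, h]; ring
    have hd₂0 : d₂ ≠ 0 := by
      intro h; apply hb; rw [← hd₂, h]; ring
    have hsq : d₁ ^ 2 ≠ d₂ ^ 2 := by
      rw [hd₁, hd₂]
      intro h; apply hsne; linear_combination h
    have h1n1 : d₁ ≠ -d₁ := by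
      intro h
      apply hd₁0
      have : (2 : ZMod p) * d₁ = 0 := by linear_combination h
      rcases mul_eq_zero.mp this with h' | h'
      · exact absurd h' h2
      · exact h'
    have h2n2 : d₂ ≠ -d₂ := by
      intro h
      apply hd₂0
      have : (2 : ZMod p) * d₂ = 0 := by linear_combination h
      rcases mul_eq_zero.mp this with h' | h'
      · exact absurd h' h2
      · exact h'
    have h12' : d₁ ≠ d₂ := fun h => hsq (by rw [h])
    have h1n2 : d₁ ≠ -d₂ := fun h => hsq (by rw [h]; ring)
    have hn12 : -d₁ ≠ d₂ := fun h => hsq (by rw [← h]; ring)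
    have hn1n2 : -d₁ ≠ -d₂ := fun h => h12' (by
      have := neg_injective h; exact this)
    have hSeq : {d : ZMod p | d ^ 4 + 6 * d ^ 2 - 3 = 0} =
        ({d₁, -d₁, d₂, -d₂} : Set (ZMod p)) := by
      ext d
      simp only [Set.mem_setOf_eq, Set.mem_insert_iff, Set.mem_singleton_iff]
      constructor
      · intro h
        have hfac : (d ^ 2 - (-3 + s)) * (d ^ 2 - (-3 - s)) = 0 := by
          linear_combination h - hs
        rcases mul_eq_zero.mp hfac with h1 | h1
        · have : (d - d₁) * (d + d₁) = 0 := by linear_combination h1 - hd₁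
          rcases mul_eq_zero.mp this with h' | h'
          · left; linear_combination h'
          · right; left; linear_combination h'
        · have : (d - d₂) * (d + d₂) = 0 := by linear_combination h1 - hd₂
          rcases mul_eq_zero.mp this with h' | h'
          · right; right; left; linear_combination h'
          · right; right; right; linear_combination h'
      · rintro (h | h | h | h) <;> rw [h] <;>
          first
            | linear_combination (d₁ ^ 2 + 3 + s) * hd₁ + hs
            | linear_combination (d₂ ^ 2 + 3 - s) * hd₂ + hs
    rw [hSeq]
    rw [Set.ncard_insert_of_notMem (by simp [h1n1, h12', h1n2]),
      Set.ncard_insert_of_notMem (by simp [hn12, hn1n2]),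
      Set.ncard_pair h2n2]
  · left
    have hex2 : ¬ ∃ d : ZMod p, d ^ 2 = -3 - s := fun h => hex (hiff.mpr h)
    have hSeq : {d : ZMod p | d ^ 4 + 6 * d ^ 2 - 3 = 0} = (∅ : Set (ZMod p)) := by
      ext d
      simp only [Set.mem_setOf_eq, Set.mem_empty_iff_false, iff_false]
      intro h
      have hfac : (d ^ 2 - (-3 + s)) * (d ^ 2 - (-3 - s)) = 0 := by
        linear_combination h - hs
      rcases mul_eq_zero.mp hfac with h1 | h1
      · exact hex ⟨d, by linear_combination h1⟩
      · exact hex2 ⟨d, by linear_combination h1⟩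
    rw [hSeq, Set.ncard_empty]
end

section
/- Let p be a prime with p ≡ 11 (mod 12). Then the polynomial d^4 + 6d^2 - 3 has exactly 2 roots in 𝔽_p. -/
open ZMod

lemma two_not_sq_mod3 : ¬ IsSquare (2 : ZMod 3) := by decide

lemma key_aux {p : ℕ} [Fact p.Prime] (h2 : (2 : ZMod p) ≠ 0)
    (a b e : ZMod p) (hsum : a + b = -6) (hprod : a * b = -3)
    (h3 : (-3 : ZMod p) ≠ 0) (he : e ^ 2 = a) (hb : ¬ IsSquare b) :
    {d : ZMod p | d ^ 4 + 6 * d ^ 2 - 3 = 0}.ncard = 2 := by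
  have he0 : e ≠ 0 := by
    rintro rfl
    rw [← hprod, ← he] at h3
    simp at h3
  have hset : {d : ZMod p | d ^ 4 + 6 * d ^ 2 - 3 = 0} = {e, -e} := by
    ext d
    simp only [Set.mem_setOf_eq, Set.mem_insert_iff, Set.mem_singleton_iff]
    constructor
    · intro hd
      have hfac : (d ^ 2 - a) * (d ^ 2 - b) = 0 := by
        have : (d ^ 2 - a) * (d ^ 2 - b) = d ^ 4 - (a + b) * d ^ 2 + a * b := by ring
        rw [this, hsum, hprod]; linear_combination hd
      rcases mul_eq_zero.mp hfac with h | h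
      · have : (d - e) * (d + e) = 0 := by linear_combination h - he
        rcases mul_eq_zero.mp this with h' | h'
        · left; linear_combination h'
        · right; linear_combination h'
      · exact absurd ⟨d, by linear_combination -h⟩ hb
    · intro hd
      have hda : d ^ 2 = a := by
        rcases hd with h | h <;> rw [h]
        · exact he
        · rw [neg_pow]; simpa using he
      linear_combination (d ^ 2 - b) * hda + d ^ 2 * hsum - hprod
  rw [hset]
  refine Set.ncard_pair ?_
  intro h
  apply he0
  have : (2 : ZMod p) * e = 0 := by linear_combination h
  rcases mul_eq_zero.mp this with h' | h'
  · exact absurd h' h2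
  · exact h'

theorem stmt_5 (p : ℕ) (hp : p.Prime) (hp12 : p % 12 = 11) :
    {d : ZMod p | d ^ 4 + 6 * d ^ 2 - 3 = 0}.ncard = 2 := by
  haveI : Fact p.Prime := ⟨hp⟩
  have hge : 11 ≤ p := by omega
  have hp4 : p % 4 = 3 := by omega
  have hp3 : p % 3 = 2 := by omega
  have hp2 : p ≠ 2 := by omega
  have hpne3 : p ≠ 3 := by omega
  have h2 : (2 : ZMod p) ≠ 0 := by
    have : ((2 : ℕ) : ZMod p) ≠ 0 := by
      rw [Ne, ZMod.natCast_eq_zero_iff]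
      intro h; have := Nat.le_of_dvd (by norm_num) h; omega
    simpa using this
  have h3ne : (3 : ZMod p) ≠ 0 := by
    have : ((3 : ℕ) : ZMod p) ≠ 0 := by
      rw [Ne, ZMod.natCast_eq_zero_iff]
      intro h; have := Nat.le_of_dvd (by norm_num) h; omega
    simpa using this
  have hneg3 : (-3 : ZMod p) ≠ 0 := by simpa using h3ne
  -- 3 is a square mod p
  have h3sq : IsSquare (3 : ZMod p) := by
    haveI : Fact (Nat.Prime 3) := ⟨by norm_num⟩
    have := (ZMod.exists_sq_eq_prime_iff_of_mod_four_eq_three (p := p) (q := 3)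
      hp4 (by norm_num) hpne3)
    rw [show ((3 : ℕ) : ZMod p) = (3 : ZMod p) by norm_cast] at this
    apply this.mpr
    have hcast : ((p : ℕ) : ZMod 3) = 2 := by
      rw [← ZMod.natCast_mod, hp3]; rfl
    have hns := two_not_sq_mod3
    rw [hcast]; exact hns
  obtain ⟨s, hs⟩ := h3sq
  -- -1 is not a square
  have hneg1 : ¬ IsSquare (-1 : ZMod p) := by
    rw [ZMod.exists_sq_eq_neg_one_iff]
    simp [hp4]
  have hs0 : s ≠ 0 := fun h => h3ne (by rw [hs, h, mul_zero])
  have hneg3sq : ¬ IsSquare (-3 : ZMod p) := by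
    rintro ⟨t, ht⟩
    apply hneg1
    refine ⟨t * s⁻¹, ?_⟩
    field_simp
    rw [sq, ← hs]
    linear_combination ht
  set a : ZMod p := -3 + 2 * s with ha
  set b : ZMod p := -3 - 2 * s with hb
  have hsum : a + b = -6 := by ring
  have hprod : a * b = -3 := by rw [ha, hb]; linear_combination 4 * hs
  by_cases hA : IsSquare a
  · obtain ⟨e, he⟩ := hA
    refine key_aux h2 a b e hsum hprod hneg3 (by rw [sq]; exact he.symm) ?_
    intro hB
    obtain ⟨f, hf⟩ := hB
    exact hneg3sq ⟨e * f, by linear_combination (-1 : ZMod p) * hprod + b * he + e * e * hf⟩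
  · -- then b is a square since quadraticChar
    have hB : IsSquare b := by
      have ha0 : a ≠ 0 := fun h => hneg3 (by rw [← hprod, h, zero_mul])
      have hb0 : b ≠ 0 := fun h => hneg3 (by rw [← hprod, h, mul_zero])
      by_contra hB
      have χa := (quadraticChar_neg_one_iff_not_isSquare (F := ZMod p)).mpr hA
      have χb := (quadraticChar_neg_one_iff_not_isSquare (F := ZMod p)).mpr hB
      have : quadraticChar (ZMod p) (a * b) = 1 := by
        rw [map_mul, χa, χb]; ring
      rw [hprod] at this
      exact hneg3sq ((quadraticChar_one_iff_isSquare hneg3).mp this)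
    obtain ⟨e, he⟩ := hB
    refine key_aux h2 b a e (by rw [← hsum]; ring) (by rw [← hprod]; ring) hneg3
      (by rw [sq]; exact he.symm) hA
end

section
/- Let p be an odd prime, and suppose u, d ∈ 𝔽_p satisfy u^2 = -1 and d^4 + 6d^2 - 3 = 0. Then ((1/4)(1+u)(d^3 + 5d))^4 = -3. In particular, -3 is a fourth power in 𝔽_p. -/
theorem stmt_6 (p : ℕ) (hp : p.Prime) (hodd : p ≠ 2) (u d : ZMod p)
    (hu : u ^ 2 = -1) (hd : d ^ 4 + 6 * d ^ 2 - 3 = 0) :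
    ((4 : ZMod p)⁻¹ * (1 + u) * (d ^ 3 + 5 * d)) ^ 4 = -3 ∧ ∃ z : ZMod p, z ^ 4 = -3 := by
  haveI := Fact.mk hp
  have h2 : (2 : ZMod p) ≠ 0 := by
    intro h
    have hdvd : (p : ℕ) ∣ 2 := (ZMod.natCast_eq_zero_iff 2 p).mp (by exact_mod_cast h)
    exact hodd ((Nat.prime_dvd_prime_iff_eq hp Nat.prime_two).mp hdvd)
  have h4 : (4 : ZMod p) ≠ 0 := by
    have : (4 : ZMod p) = 2 * 2 := by norm_num
    rw [this]
    exact mul_ne_zero h2 h2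
  have hY : ((1 + u) * (d ^ 3 + 5 * d)) ^ 4 = -768 := by
    linear_combination (3125*d^4 + 2500*d^6 + 750*d^8 + 100*d^10 + 5*d^12
      + u*(2500*d^4 + 2000*d^6 + 600*d^8 + 80*d^10 + 4*d^12)
      + u^2*(625*d^4 + 500*d^6 + 150*d^8 + 20*d^10 + d^12)) * hu
      + (-256 - 512*d^2 - 276*d^4 - 56*d^6 - 4*d^8) * hd
  have key : ((4 : ZMod p)⁻¹ * (1 + u) * (d ^ 3 + 5 * d)) ^ 4 = -3 := by
    have : ((4 : ZMod p)⁻¹ * (1 + u) * (d ^ 3 + 5 * d)) ^ 4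
        = (4 : ZMod p)⁻¹ ^ 4 * ((1 + u) * (d ^ 3 + 5 * d)) ^ 4 := by ring
    rw [this, hY]
    field_simp
    ring
  exact ⟨key, _, key⟩
end

section
/- Let F be a field of characteristic ≠ 2, 3 and let d ∈ F with d^4 + 6d^2 - 3 = 0, d ≠ 0. Then the 3×3 matrix B over F(e) (where e^2 = (d^2-1)/d) given by B = [[ (d^2+1)^2/(2d), -e(d^2+1), e(d^4+4d^2+3)/(2d) ], [ d·e·(d^2+1)^2/(2(d^2-1)), -(d^2+1)/d, -(d^4+4d^2+3)/2 ], [ 2e, 4(d^2-1)/(d^2+1), 2(d^2-1)^2/(d(d^2+1)) ]] (the case u = 1) has characteristic polynomial x^3 - (256/3)(d^3 - d). -/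
open Polynomial Matrix in
theorem charpoly_fin3_aux {R : Type*} [CommRing R] (M : Matrix (Fin 3) (Fin 3) R) :
    M.charpoly = X^3 - C M.trace * X^2
      + C (M 0 0 * M 1 1 + M 0 0 * M 2 2 + M 1 1 * M 2 2 - M 0 1 * M 1 0 - M 0 2 * M 2 0 - M 1 2 * M 2 1) * X
      - C M.det := by
  simp [charpoly, charmatrix_apply, det_fin_three, trace_fin_three, Matrix.one_apply]
  ring

open Polynomial in
theorem stmt_17 (F : Type*) [Field F] (h2 : ringChar F ≠ 2) (h3 : ringChar F ≠ 3) (d e : F)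
    (hd : d ^ 4 + 6 * d ^ 2 - 3 = 0) (hd0 : d ≠ 0) (he : e ^ 2 = (d ^ 2 - 1) / d) :
    (Matrix.of !![(d ^ 2 + 1) ^ 2 / (2 * d), -e * (d ^ 2 + 1),
        e * (d ^ 4 + 4 * d ^ 2 + 3) / (2 * d);
      d * e * (d ^ 2 + 1) ^ 2 / (2 * (d ^ 2 - 1)), -(d ^ 2 + 1) / d,
        -(d ^ 4 + 4 * d ^ 2 + 3) / 2;
      2 * e, 4 * (d ^ 2 - 1) / (d ^ 2 + 1),
        2 * (d ^ 2 - 1) ^ 2 / (d * (d ^ 2 + 1))]).charpoly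
      = X ^ 3 - C (256 / 3 * (d ^ 3 - d)) := by
  have h2' : (2:F) ≠ 0 := Ring.two_ne_zero h2
  have h3' : (3:F) ≠ 0 := by
    intro h
    have : ringChar F ∣ 3 := by
      have : ((3:ℕ):F) = 0 := by push_cast; exact h
      exact ringChar.dvd this
    rcases (Nat.dvd_prime Nat.prime_three).1 this with h1 | h1
    · exact CharP.ringChar_ne_one h1
    · exact h3 h1
  have hdm : d ^ 2 - 1 ≠ 0 := by
    intro h
    have : (2:F)*2 = 0 := by linear_combination hd - (d^2 + 7) * h
    rcases mul_eq_zero.1 this with h' | h' <;> exact h2' h'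
  have hdp : d ^ 2 + 1 ≠ 0 := by
    intro h
    have : (2:F)*(2*2) = 0 := by linear_combination -hd + (d^2 + 5) * h
    rcases mul_eq_zero.1 this with h' | h'
    · exact h2' h'
    rcases mul_eq_zero.1 h' with h'' | h'' <;> exact h2' h''
  have he' : e ^ 2 * d = d ^ 2 - 1 := by
    field_simp at he; linear_combination he
  have hinv3 : (3:F) * (3:F)⁻¹ = 1 := mul_inv_cancel₀ h3'
  set M : Matrix (Fin 3) (Fin 3) F := Matrix.of !![(d ^ 2 + 1) ^ 2 / (2 * d), -e * (d ^ 2 + 1),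
        e * (d ^ 4 + 4 * d ^ 2 + 3) / (2 * d);
      d * e * (d ^ 2 + 1) ^ 2 / (2 * (d ^ 2 - 1)), -(d ^ 2 + 1) / d,
        -(d ^ 4 + 4 * d ^ 2 + 3) / 2;
      2 * e, 4 * (d ^ 2 - 1) / (d ^ 2 + 1),
        2 * (d ^ 2 - 1) ^ 2 / (d * (d ^ 2 + 1))] with hM
  have hc : 2*d*(d^2-1)*(d^2+1) ≠ 0 := by apply_rules [mul_ne_zero]
  have h00 : 2*d*(d^2-1)*(d^2+1) * M 0 0 = (d^2-1)*(d^2+1)^3 := by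
    show 2*d*(d^2-1)*(d^2+1) * ((d ^ 2 + 1) ^ 2 / (2 * d)) = (d^2-1)*(d^2+1)^3
    field_simp
  have h01 : 2*d*(d^2-1)*(d^2+1) * M 0 1 = -(2*d*e*(d^2-1)*(d^2+1)^2) := by
    show 2*d*(d^2-1)*(d^2+1) * (-e * (d ^ 2 + 1)) = -(2*d*e*(d^2-1)*(d^2+1)^2)
    ring
  have h02 : 2*d*(d^2-1)*(d^2+1) * M 0 2 = e*(d^2-1)*(d^2+1)^2*(d^2+3) := by
    show 2*d*(d^2-1)*(d^2+1) * (e * (d ^ 4 + 4 * d ^ 2 + 3) / (2 * d)) = e*(d^2-1)*(d^2+1)^2*(d^2+3)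
    field_simp; ring
  have h10 : 2*d*(d^2-1)*(d^2+1) * M 1 0 = d^2*e*(d^2+1)^3 := by
    show 2*d*(d^2-1)*(d^2+1) * (d * e * (d ^ 2 + 1) ^ 2 / (2 * (d ^ 2 - 1))) = d^2*e*(d^2+1)^3
    field_simp
  have h11 : 2*d*(d^2-1)*(d^2+1) * M 1 1 = -(2*(d^2-1)*(d^2+1)^2) := by
    show 2*d*(d^2-1)*(d^2+1) * (-(d ^ 2 + 1) / d) = -(2*(d^2-1)*(d^2+1)^2)
    field_simp
  have h12 : 2*d*(d^2-1)*(d^2+1) * M 1 2 = -(d*(d^2-1)*(d^2+1)^2*(d^2+3)) := by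
    show 2*d*(d^2-1)*(d^2+1) * (-(d ^ 4 + 4 * d ^ 2 + 3) / 2) = -(d*(d^2-1)*(d^2+1)^2*(d^2+3))
    field_simp; ring
  have h20 : 2*d*(d^2-1)*(d^2+1) * M 2 0 = 4*d*e*(d^2-1)*(d^2+1) := by
    show 2*d*(d^2-1)*(d^2+1) * (2 * e) = 4*d*e*(d^2-1)*(d^2+1)
    ring
  have h21 : 2*d*(d^2-1)*(d^2+1) * M 2 1 = 8*d*(d^2-1)^2 := by
    show 2*d*(d^2-1)*(d^2+1) * (4 * (d ^ 2 - 1) / (d ^ 2 + 1)) = 8*d*(d^2-1)^2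
    field_simp; ring
  have h22 : 2*d*(d^2-1)*(d^2+1) * M 2 2 = 4*(d^2-1)^3 := by
    show 2*d*(d^2-1)*(d^2+1) * (2 * (d ^ 2 - 1) ^ 2 / (d * (d ^ 2 + 1))) = 4*(d^2-1)^3
    field_simp; ring
  rw [charpoly_fin3_aux]
  have htr : M.trace = 0 := by
    rw [Matrix.trace_fin_three]
    refine mul_left_cancel₀ hc ?_
    rw [mul_zero]
    linear_combination h00 + h11 + h22 + (d^2-1)^2 * hd
  have hS : M 0 0 * M 1 1 + M 0 0 * M 2 2 + M 1 1 * M 2 2 - M 0 1 * M 1 0 - M 0 2 * M 2 0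
      - M 1 2 * M 2 1 = 0 := by
    refine mul_left_cancel₀ (pow_ne_zero 2 hc) ?_
    rw [mul_zero]
    linear_combination
      (2*d*(d^2-1)*(d^2+1) * M 0 0) * h11 + (-(2*(d^2-1)*(d^2+1)^2)) * h00
      + (2*d*(d^2-1)*(d^2+1) * M 0 0) * h22 + (4*(d^2-1)^3) * h00
      + (2*d*(d^2-1)*(d^2+1) * M 1 1) * h22 + (4*(d^2-1)^3) * h11
      - ((2*d*(d^2-1)*(d^2+1) * M 0 1) * h10 + (d^2*e*(d^2+1)^3) * h01)
      - ((2*d*(d^2-1)*(d^2+1) * M 0 2) * h20 + (4*d*e*(d^2-1)*(d^2+1)) * h02)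
      - ((2*d*(d^2-1)*(d^2+1) * M 1 2) * h21 + (8*d*(d^2-1)^2) * h12)
      + (2*d^14 + 4*d^12 - 6*d^10 - 4*d^8 + 22*d^6 + 12*d^4 - 18*d^2 - 12) * he'
      + (2*d^12 - 6*d^8 + 6*d^4 - 2) * hd
  have hdet : M.det = 256 / 3 * (d ^ 3 - d) := by
    rw [Matrix.det_fin_three]
    refine mul_left_cancel₀ (mul_ne_zero h3' (pow_ne_zero 3 hc)) ?_
    linear_combination
      3*(((2*d*(d^2-1)*(d^2+1))^2 * (M 0 0 * M 1 1)) * h22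
        + ((2*d*(d^2-1)*(d^2+1)) * M 0 0 * (4*(d^2-1)^3)) * h11
        + ((-(2*(d^2-1)*(d^2+1)^2)) * (4*(d^2-1)^3)) * h00)
      - 3*(((2*d*(d^2-1)*(d^2+1))^2 * (M 0 0 * M 1 2)) * h21
        + ((2*d*(d^2-1)*(d^2+1)) * M 0 0 * (8*d*(d^2-1)^2)) * h12
        + ((-(d*(d^2-1)*(d^2+1)^2*(d^2+3))) * (8*d*(d^2-1)^2)) * h00)
      - 3*(((2*d*(d^2-1)*(d^2+1))^2 * (M 0 1 * M 1 0)) * h22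
        + ((2*d*(d^2-1)*(d^2+1)) * M 0 1 * (4*(d^2-1)^3)) * h10
        + ((d^2*e*(d^2+1)^3) * (4*(d^2-1)^3)) * h01)
      + 3*(((2*d*(d^2-1)*(d^2+1))^2 * (M 0 1 * M 1 2)) * h20
        + ((2*d*(d^2-1)*(d^2+1)) * M 0 1 * (4*d*e*(d^2-1)*(d^2+1))) * h12
        + ((-(d*(d^2-1)*(d^2+1)^2*(d^2+3))) * (4*d*e*(d^2-1)*(d^2+1))) * h01)
      + 3*(((2*d*(d^2-1)*(d^2+1))^2 * (M 0 2 * M 1 0)) * h21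
        + ((2*d*(d^2-1)*(d^2+1)) * M 0 2 * (8*d*(d^2-1)^2)) * h10
        + ((d^2*e*(d^2+1)^3) * (8*d*(d^2-1)^2)) * h02)
      - 3*(((2*d*(d^2-1)*(d^2+1))^2 * (M 0 2 * M 1 1)) * h20
        + ((2*d*(d^2-1)*(d^2+1)) * M 0 2 * (4*d*e*(d^2-1)*(d^2+1))) * h11
        + ((-(2*(d^2-1)*(d^2+1)^2)) * (4*d*e*(d^2-1)*(d^2+1))) * h02)
      + (72*d^20 + 288*d^18 + 216*d^16 - 576*d^14 - 1008*d^12 + 1008*d^8 + 576*d^6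
          - 216*d^4 - 288*d^2 - 72) * he'
      + (96*d^18 - 288*d^16 - 128*d^14 + 896*d^12 - 192*d^10 - 960*d^8 + 384*d^6
          + 384*d^4 - 160*d^2 - 32) * hd
      - (256*(2*d*(d^2-1)*(d^2+1))^3*(d^3-d)) * hinv3
  rw [htr, hS, hdet]
  simp
end

section
/- Let p be a prime with p ≡ 1 (mod 4) and write p = a^2 + b^2 with a odd (as is always possible). Then the number of affine points (x, y) ∈ 𝔽_p^2 on the curve y^2 = x^3 - x is p - 2a for the appropriate normalization a + ib ≡ 1 (mod 2 + 2i) in ℤ[i]; if instead p ≡ 3 (mod 4), then the number of affine points (x, y) ∈ 𝔽_p^2 with y^2 = x^3 - x is exactly p. -/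
set_option maxHeartbeats 1000000

open Finset

namespace Stmt19Aux

/-- `i` in `ℤ[i]`. -/
def II : GaussianInt := ⟨0, 1⟩

/-- `2 + 2i`. -/
def lam : GaussianInt := ⟨2, 2⟩

lemma II_sq : II ^ 2 = -1 := by
  ext <;> simp [II, pow_two, Zsqrtd.re_mul, Zsqrtd.im_mul]

lemma II_pow_four : II ^ 4 = 1 := by
  rw [show (4:ℕ) = 2*2 by rfl, pow_mul, II_sq]; ring

lemma isPrimitiveRoot_II : IsPrimitiveRoot II 4 := by
  have h1 : II ≠ 1 := by simp [II, Zsqrtd.ext_iff]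
  have h2 : II ^ 2 ≠ 1 := by rw [II_sq]; intro h; have := congrArg Zsqrtd.re h; simp at this
  have h3 : II ^ 3 ≠ 1 := by
    rw [show (3:ℕ) = 2+1 by rfl, pow_add, II_sq, pow_one]
    simp [II, Zsqrtd.ext_iff]
  refine ⟨II_pow_four, fun l hl => ?_⟩
  set r := l % 4 with hr
  have hmod : II ^ r = 1 := by
    conv at hl => rw [← Nat.div_add_mod l 4, pow_add, pow_mul, II_pow_four, one_pow, one_mul]
    exact hl
  have hrlt : r < 4 := Nat.mod_lt _ (by norm_num)
  have hr0 : r = 0 := by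
    interval_cases r
    · rfl
    · exact absurd (by simpa using hmod) h1
    · exact absurd hmod h2
    · exact absurd hmod h3
  exact Nat.dvd_of_mod_eq_zero (hr ▸ hr0)

/-- The fourth roots of unity in `ℤ[i]`. -/
lemma quartic_cases {z : GaussianInt} (hz : z ^ 4 = 1) :
    z = 1 ∨ z = -1 ∨ z = II ∨ z = -II := by
  have hII : II ^ 2 = -1 := II_sq
  have h : (z - 1) * ((z + 1) * ((z - II) * (z + II))) = 0 := by
    linear_combination hz - (z^2 - 1) * hII
  rcases mul_eq_zero.mp h with h | h
  · exact Or.inl (sub_eq_zero.mp h)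
  rcases mul_eq_zero.mp h with h | h
  · exact Or.inr (Or.inl (by have := eq_neg_of_add_eq_zero_left h; exact this))
  rcases mul_eq_zero.mp h with h | h
  · exact Or.inr (Or.inr (Or.inl (sub_eq_zero.mp h)))
  · exact Or.inr (Or.inr (Or.inr (eq_neg_of_add_eq_zero_left h)))

lemma one_sub_II_dvd {z : GaussianInt} (hz : z ^ 4 = 1) : (1 - II) ∣ z - 1 := by
  rcases quartic_cases hz with h | h | h | h <;> subst h
  · simp
  · exact ⟨-(1+II), by ext <;> simp [II, Zsqrtd.ext_iff, Zsqrtd.re_mul, Zsqrtd.im_mul]⟩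
  · exact ⟨-1, by ext <;> simp [II, Zsqrtd.ext_iff, Zsqrtd.re_mul, Zsqrtd.im_mul]⟩
  · exact ⟨-II, by ext <;> simp [II, Zsqrtd.ext_iff, Zsqrtd.re_mul, Zsqrtd.im_mul]⟩

lemma lam_eq : lam = (2 - 2*II) * II := by ext <;> simp [II, lam, Zsqrtd.re_mul, Zsqrtd.im_mul]

lemma lam_dvd_iff {z : GaussianInt} : lam ∣ z ↔ (2 - 2*II) ∣ z := by
  constructor
  · rintro ⟨k, rfl⟩; exact ⟨II * k, by rw [lam_eq]; ring⟩
  · rintro ⟨k, rfl⟩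
    refine ⟨-II * k, ?_⟩
    have : lam * -II = 2 - 2*II := by ext <;> simp [II, lam, Zsqrtd.re_mul, Zsqrtd.im_mul]
    rw [← this]; ring

lemma lam_dvd_four : lam ∣ 4 := ⟨1 - II, by ext <;> simp [II, lam, Zsqrtd.re_mul, Zsqrtd.im_mul]⟩

lemma lam_dvd_intCast {n : ℤ} (hn : (4:ℤ) ∣ n) : lam ∣ (n : GaussianInt) := by
  obtain ⟨k, rfl⟩ := hn
  push_cast
  exact Dvd.dvd.mul_right (by exact_mod_cast lam_dvd_four) _

lemma norm_lam : lam.norm = 8 := by simp [lam, Zsqrtd.norm_def]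

lemma star_lam : star lam = lam * (-II) := by
  ext <;> simp [II, lam, Zsqrtd.re_mul, Zsqrtd.im_mul, Zsqrtd.re_star, Zsqrtd.im_star]


lemma norm_one_cases {w : GaussianInt} (hw : w.norm = 1) :
    w = 1 ∨ w = -1 ∨ w = II ∨ w = -II := by
  have h : w.re^2 + w.im^2 = 1 := by
    have := hw; rw [Zsqrtd.norm_def] at this; nlinarith [this]
  have hre : -1 ≤ w.re ∧ w.re ≤ 1 := by constructor <;> nlinarith [sq_nonneg w.im]
  have him : -1 ≤ w.im ∧ w.im ≤ 1 := by constructor <;> nlinarith [sq_nonneg w.re]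
  obtain ⟨h1, h2⟩ := hre; obtain ⟨h3, h4⟩ := him
  simp only [Zsqrtd.ext_iff, II]
  interval_cases hh : w.re <;> interval_cases hh2 : w.im <;> simp_all

/-- norm-prime elements are prime. -/
lemma prime_of_norm_prime {π : GaussianInt} (hπ : Prime π.norm) : Prime π := by
  have hirr : Irreducible π := by
    rw [Int.prime_iff_natAbs_prime] at hπ
    constructor
    · intro hu
      rw [← Zsqrtd.norm_eq_one_iff] at hu
      exact hπ.ne_one hu
    · intro x y hxy
      have hn : π.norm.natAbs = x.norm.natAbs * y.norm.natAbs := by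
        rw [hxy, Zsqrtd.norm_mul, Int.natAbs_mul]
      rcases hπ.eq_one_or_self_of_dvd x.norm.natAbs ⟨y.norm.natAbs, hn⟩ with h | h
      · exact Or.inl (Zsqrtd.norm_eq_one_iff.mp h)
      · refine Or.inr (Zsqrtd.norm_eq_one_iff.mp ?_)
        have hpos := hπ.pos
        rw [h] at hn
        nlinarith [hn]
  exact hirr.prime

lemma lam_norm_dvd {z : GaussianInt} (h : lam ∣ z) : (8:ℤ) ∣ z.norm := by
  obtain ⟨k, rfl⟩ := h
  rw [Zsqrtd.norm_mul, norm_lam]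
  exact Dvd.dvd.mul_right dvd_rfl _

lemma eq_of_dvd_primary {p : ℕ} (hpo : p % 2 = 1) {π' τ : GaussianInt}
    (hnπ' : π'.norm = p) (hnτ : τ.norm = p) (hdvd : π' ∣ τ)
    (h1 : lam ∣ π' - 1) (h2 : lam ∣ τ - 1) : τ = π' := by
  obtain ⟨w, rfl⟩ := hdvd
  have hp0 : (p:ℤ) ≠ 0 := by
    have : p ≠ 0 := by omega
    exact_mod_cast this
  have hw : w.norm = 1 := by
    have := hnτ
    rw [Zsqrtd.norm_mul, hnπ'] at this
    replace this := mul_left_cancel₀ hp0 (this.trans (mul_one _).symm)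
    exact this
  have hdiff : lam ∣ π' * (w - 1) := by
    have : π' * (w - 1) = (π' * w - 1) - (π' - 1) := by ring
    rw [this]
    exact dvd_sub h2 h1
  have hnd : (8:ℤ) ∣ (p:ℤ) * (w-1).norm := by
    have := lam_norm_dvd hdiff
    rwa [Zsqrtd.norm_mul, hnπ'] at this
  rcases norm_one_cases hw with rfl | rfl | rfl | rfl
  · rw [mul_one]
  · exfalso
    have hn4 : ((-1:GaussianInt) - 1).norm = 4 := by
      rw [show ((-1:GaussianInt) - 1) = ⟨-2, 0⟩ by ext <;> simp]
      simp [Zsqrtd.norm_def]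
    rw [hn4] at hnd
    obtain ⟨k, hk⟩ := hnd
    have : (p:ℤ) % 2 = 1 := by exact_mod_cast hpo
    omega
  · exfalso
    have hn4 : ((II:GaussianInt) - 1).norm = 2 := by
      rw [show ((II:GaussianInt) - 1) = ⟨-1, 1⟩ by ext <;> simp [II]]
      simp [Zsqrtd.norm_def]
    rw [hn4] at hnd
    obtain ⟨k, hk⟩ := hnd
    have : (p:ℤ) % 2 = 1 := by exact_mod_cast hpo
    omega
  · exfalso
    have hn4 : (-(II:GaussianInt) - 1).norm = 2 := by
      rw [show (-(II:GaussianInt) - 1) = ⟨-1, -1⟩ by ext <;> simp [II]]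
      simp [Zsqrtd.norm_def]
    rw [hn4] at hnd
    obtain ⟨k, hk⟩ := hnd
    have : (p:ℤ) % 2 = 1 := by exact_mod_cast hpo
    omega

lemma re_unique {p : ℕ} (hp : p.Prime) (hpo : p % 2 = 1) {π π' : GaussianInt}
    (h : π.norm = p) (h' : π'.norm = p) (hd : lam ∣ π - 1) (hd' : lam ∣ π' - 1) :
    π.re = π'.re := by
  have hprime : Prime π' := prime_of_norm_prime (h' ▸ (Int.prime_iff_natAbs_prime.mpr (by simpa using hp)))
  have hdvd : π' ∣ π * star π := by
    have e1 : π * star π = ((p:ℤ) : GaussianInt) := by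
      rw [← Zsqrtd.norm_eq_mul_conj, h]
    have e2 : π' * star π' = ((p:ℤ) : GaussianInt) := by
      rw [← Zsqrtd.norm_eq_mul_conj, h']
    rw [e1, ← e2]
    exact dvd_mul_right _ _
  rcases hprime.2.2 _ _ hdvd with hc | hc
  · rw [eq_of_dvd_primary hpo h' h hc hd' hd]
  · have hds : lam ∣ star π - 1 := by
      obtain ⟨k, hk⟩ := hd
      refine ⟨-II * star k, ?_⟩
      have : star π - 1 = star (π - 1) := by rw [star_sub, star_one]
      rw [this, hk, star_mul', star_lam]
      ring
    have := eq_of_dvd_primary hpo h' (by rw [Zsqrtd.norm_conj, h]) hc hd' hds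
    rw [← this, Zsqrtd.re_star]

section Char

variable {p : ℕ} [Fact p.Prime]

lemma val_pow_four {χ : MulChar (ZMod p) GaussianInt} (hχ : orderOf χ = 4)
    {z : ZMod p} (hz : z ≠ 0) : (χ z) ^ 4 = 1 := by
  have h : χ ^ 4 = 1 := hχ ▸ pow_orderOf_eq_one χ
  have h2 := MulChar.pow_apply' χ (show (4:ℕ) ≠ 0 by norm_num) z
  rw [h, ← hz.isUnit.unit_spec, MulChar.one_apply_coe] at h2
  rw [hz.isUnit.unit_spec] at h2
  exact h2.symm

lemma chi_g_sq {χ : MulChar (ZMod p) GaussianInt} (hχ : orderOf χ = 4)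
    {g : (ZMod p)ˣ} (hg : ∀ x : (ZMod p)ˣ, x ∈ Subgroup.zpowers g) :
    (χ (g : ZMod p)) ^ 2 = -1 := by
  have h4 : (χ (g : ZMod p)) ^ 4 = 1 := val_pow_four hχ g.ne_zero
  have hsq : ((χ (g : ZMod p)) ^ 2) * ((χ (g : ZMod p)) ^ 2) = 1 := by
    rw [← pow_add]; exact h4
  rcases mul_self_eq_one_iff.mp hsq with h | h
  · exfalso
    have hne : χ ^ 2 ≠ 1 := pow_ne_one_of_lt_orderOf (by norm_num) (by omega)
    apply hne
    apply MulChar.ext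
    intro a
    obtain ⟨k, hk⟩ := (mem_powers_iff_mem_zpowers).mpr (hg a)
    have : χ (a : ZMod p) = (χ (g : ZMod p)) ^ k := by
      rw [← hk, Units.val_pow_eq_pow_val, map_pow]
    rw [MulChar.pow_apply' χ (by norm_num), this, MulChar.one_apply_coe, ← pow_mul, mul_comm k 2,
      pow_mul, h, one_pow]
  · exact h

lemma rho_val {χ : MulChar (ZMod p) GaussianInt} (hχ : orderOf χ = 4) (c : ZMod p) :
    (χ ^ 2) c = ((quadraticChar (ZMod p) c : ℤ) : GaussianInt) := by
  by_cases hc : c = 0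
  · subst hc
    rw [MulChar.map_zero, MulChar.map_zero]
    norm_num
  · rw [MulChar.pow_apply' χ (by norm_num)]
    by_cases hsq : IsSquare c
    · obtain ⟨r, rfl⟩ := hsq
      have hr : r ≠ 0 := fun h => hc (by rw [h, mul_zero])
      rw [(quadraticChar_one_iff_isSquare hc).mpr ⟨r, rfl⟩]
      rw [map_mul, ← pow_two, ← pow_mul]
      rw [show (2*2 : ℕ) = 4 from rfl, val_pow_four hχ hr]
      norm_num
    · rw [quadraticChar_neg_one_iff_not_isSquare.mpr hsq]
      obtain ⟨g, hg⟩ := IsCyclic.exists_generator (α := (ZMod p)ˣ)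
      obtain ⟨k, hk⟩ := (mem_powers_iff_mem_zpowers).mpr (hg (Ne.isUnit hc).unit)
      have hck : c = (g : ZMod p) ^ k := by
        rw [← (Ne.isUnit hc).unit_spec, ← hk, Units.val_pow_eq_pow_val]
      have hkodd : Odd k := by
        rcases Nat.even_or_odd k with he | ho
        · exfalso
          obtain ⟨m, hm⟩ := he
          exact hsq ⟨(g : ZMod p) ^ m, by rw [hck, hm, pow_add]⟩
        · exact ho
      rw [hck, map_pow, ← pow_mul, mul_comm k 2, pow_mul, chi_g_sq hχ hg, hkodd.neg_one_pow]
      norm_num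

lemma card_sqrt (hp2 : p ≠ 2) {χ : MulChar (ZMod p) GaussianInt} (hχ : orderOf χ = 4) (c : ZMod p) :
    ((Finset.univ.filter fun y : ZMod p => y ^ 2 = c).card : GaussianInt) = 1 + (χ ^ 2) c := by
  have hchar : ringChar (ZMod p) ≠ 2 := by
    rw [ZMod.ringChar_zmod_n]; exact hp2
  have h := quadraticChar_card_sqrts hchar c
  have hset : {x : ZMod p | x ^ 2 = c}.toFinset = Finset.univ.filter fun y => y ^ 2 = c := by
    ext y; simp [Set.mem_toFinset]
  rw [hset] at h
  rw [rho_val hχ]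
  have h2 := congrArg (fun n : ℤ => (n : GaussianInt)) h
  push_cast at h2 ⊢
  rw [h2]; ring

lemma sum_sq_reindex (hp2 : p ≠ 2) {χ : MulChar (ZMod p) GaussianInt} (hχ : orderOf χ = 4)
    (G : ZMod p → GaussianInt) :
    ∑ x : ZMod p, G (x ^ 2) = ∑ t : ZMod p, (1 + (χ ^ 2) t) * G t := by
  classical
  rw [← Finset.sum_fiberwise Finset.univ (fun x : ZMod p => x ^ 2) (fun x => G (x ^ 2))]
  refine Finset.sum_congr rfl fun t _ => ?_
  have h1 : ∑ x ∈ Finset.univ.filter (fun x : ZMod p => x ^ 2 = t), G (x ^ 2)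
       = ∑ x ∈ Finset.univ.filter (fun x : ZMod p => x ^ 2 = t), G t := by
    refine Finset.sum_congr rfl fun x hx => ?_
    rw [(Finset.mem_filter.mp hx).2]
  rw [h1, Finset.sum_const, nsmul_eq_mul, ← card_sqrt hp2 hχ t]

lemma rho_neg_one (hp4 : p % 4 = 1) {χ : MulChar (ZMod p) GaussianInt} (hχ : orderOf χ = 4) :
    (χ ^ 2) (-1 : ZMod p) = 1 := by
  have hsq : IsSquare (-1 : ZMod p) := ZMod.exists_sq_eq_neg_one_iff.mpr (by omega)
  obtain ⟨u, hu⟩ := hsq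
  have hu0 : u ≠ 0 := by
    intro h
    rw [h, mul_zero] at hu
    exact (neg_ne_zero.mpr (one_ne_zero)) hu
  rw [hu, MulChar.pow_apply' _ (by norm_num), map_mul]
  linear_combination val_pow_four hχ hu0

lemma sum_curve_eq (hp4 : p % 4 = 1) {χ : MulChar (ZMod p) GaussianInt} (hχ : orderOf χ = 4) :
    ∑ x : ZMod p, (χ ^ 2) (x ^ 3 - x) = jacobiSum χ (χ ^ 2) + jacobiSum (χ ^ 3) (χ ^ 2) := by
  have hp2 : p ≠ 2 := fun h => by rw [h] at hp4; norm_num at hp4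
  calc ∑ x : ZMod p, (χ ^ 2) (x ^ 3 - x)
      = ∑ x : ZMod p, (fun t => χ t * (χ ^ 2) (t - 1)) (x ^ 2) := by
        refine Finset.sum_congr rfl fun x _ => ?_
        show (χ ^ 2) (x ^ 3 - x) = χ (x ^ 2) * (χ ^ 2) (x ^ 2 - 1)
        have harg : x ^ 3 - x = x * (x ^ 2 - 1) := by ring
        rw [harg, map_mul, MulChar.pow_apply' _ (by norm_num), MulChar.pow_apply' _ (by norm_num),
          map_pow]
    _ = ∑ t : ZMod p, (1 + (χ ^ 2) t) * (χ t * (χ ^ 2) (t - 1)) :=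
        sum_sq_reindex hp2 hχ (fun t => χ t * (χ ^ 2) (t - 1))
    _ = ∑ t : ZMod p, (χ t * (χ ^ 2) (1 - t) + (χ ^ 3) t * (χ ^ 2) (1 - t)) := by
        refine Finset.sum_congr rfl fun t _ => ?_
        have hneg : (χ ^ 2) (t - 1) = (χ ^ 2) (1 - t) := by
          rw [show t - 1 = -1 * (1 - t) by ring, map_mul, rho_neg_one hp4 hχ, one_mul]
        have h3 : (χ ^ 3) t = (χ ^ 2) t * χ t := by
          rw [MulChar.pow_apply' _ (by norm_num), MulChar.pow_apply' _ (by norm_num)]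
          ring
        rw [hneg, h3]
        ring
    _ = jacobiSum χ (χ ^ 2) + jacobiSum (χ ^ 3) (χ ^ 2) := by
        rw [jacobiSum, jacobiSum, ← Finset.sum_add_distrib]

lemma norm_pow (z : GaussianInt) (n : ℕ) : (z ^ n).norm = z.norm ^ n := by
  induction n with
  | zero => simp [Zsqrtd.norm_one]
  | succ n ih => rw [pow_succ, pow_succ, Zsqrtd.norm_mul, ih]

lemma star_chi_apply {χ : MulChar (ZMod p) GaussianInt} (hχ : orderOf χ = 4) (z : ZMod p) :
    star (χ z) = (χ ^ 3) z := by
  by_cases hz : z = 0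
  · subst hz
    rw [MulChar.map_zero, MulChar.map_zero, star_zero]
  · have h4 := val_pow_four hχ hz
    have hne : χ z ≠ 0 := fun h => by rw [h] at h4; norm_num at h4
    have hnorm : (χ z).norm = 1 := by
      have hn4 : ((χ z).norm) ^ 4 = 1 := by
        rw [← norm_pow, h4, Zsqrtd.norm_one]
      have hnn := Zsqrtd.norm_nonneg (by norm_num : (-1:ℤ) ≤ 0) (χ z)
      rcases lt_or_ge (Zsqrtd.norm (χ z)) 1 with h | h
      · have h0 : Zsqrtd.norm (χ z) = 0 := le_antisymm (by omega) hnn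
        rw [h0] at hn4; norm_num at hn4
      · rcases lt_or_ge 1 (Zsqrtd.norm (χ z)) with h' | h'
        · exfalso
          have hle : Zsqrtd.norm (χ z) ≤ Zsqrtd.norm (χ z) ^ 4 :=
            le_self_pow₀ (by omega) (by norm_num)
          omega
        · omega
    have hmc : χ z * star (χ z) = 1 := by
      have h := Zsqrtd.norm_eq_mul_conj (χ z)
      rw [hnorm] at h
      exact_mod_cast h.symm
    have hmc2 : χ z * (χ z) ^ 3 = 1 := by rw [← pow_succ']; exact h4
    rw [MulChar.pow_apply' _ (by norm_num)]
    exact mul_left_cancel₀ hne (hmc.trans hmc2.symm)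

lemma star_rho_apply {χ : MulChar (ZMod p) GaussianInt} (hχ : orderOf χ = 4) (s : ZMod p) :
    star ((χ ^ 2) s) = (χ ^ 2) s := by
  by_cases hs : s = 0
  · subst hs; rw [MulChar.map_zero, star_zero]
  · have h4 := val_pow_four hχ hs
    rw [MulChar.pow_apply' _ (by norm_num), star_pow, star_chi_apply hχ,
      MulChar.pow_apply' _ (by norm_num)]
    linear_combination ((χ s) ^ 2) * h4

lemma star_jacobi {χ : MulChar (ZMod p) GaussianInt} (hχ : orderOf χ = 4) :
    jacobiSum (χ ^ 3) (χ ^ 2) = star (jacobiSum χ (χ ^ 2)) := by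
  rw [jacobiSum, jacobiSum, star_sum]
  refine Finset.sum_congr rfl fun t _ => ?_
  rw [star_mul', star_chi_apply hχ, star_rho_apply hχ]

lemma jacobi_norm (hp4 : p % 4 = 1) {χ : MulChar (ZMod p) GaussianInt} (hχ : orderOf χ = 4) :
    (jacobiSum χ (χ ^ 2)).norm = p := by
  have hp' : p ≠ 0 := (Fact.out : p.Prime).ne_zero
  have hfinj : Function.Injective GaussianInt.toComplex := GaussianInt.toComplex_injective
  have hro : ringChar ℂ ≠ ringChar (ZMod p) := by
    rw [ringChar.eq_zero, ZMod.ringChar_zmod_n]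
    exact fun h => hp' h.symm
  have hχ4 : χ ^ 4 = 1 := hχ ▸ pow_orderOf_eq_one χ
  have hχ1 : χ ≠ 1 := by
    have h := pow_ne_one_of_lt_orderOf (one_ne_zero) (by omega : 1 < orderOf χ)
    rwa [pow_one] at h
  have hχ2 : χ ^ 2 ≠ 1 := pow_ne_one_of_lt_orderOf (by norm_num) (by omega)
  have hχm : χ * χ ^ 2 ≠ 1 := by
    rw [(pow_succ' χ 2).symm]
    exact pow_ne_one_of_lt_orderOf (by norm_num) (by omega)
  have H := jacobiSum_mul_jacobiSum_inv hro
    ((MulChar.ringHomComp_ne_one_iff hfinj).mpr hχ1)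
    ((MulChar.ringHomComp_ne_one_iff hfinj).mpr hχ2)
    (by rw [← MulChar.ringHomComp_mul]
        exact (MulChar.ringHomComp_ne_one_iff hfinj).mpr hχm)
  rw [MulChar.ringHomComp_inv, MulChar.ringHomComp_inv] at H
  have hinv1 : χ⁻¹ = χ ^ 3 := by
    refine inv_eq_of_mul_eq_one_right ?_
    rw [← pow_succ']; exact hχ4
  have hinv2 : (χ ^ 2)⁻¹ = χ ^ 2 := by
    refine inv_eq_of_mul_eq_one_right ?_
    rw [← pow_add]; exact hχ4
  rw [hinv1, hinv2, jacobiSum_ringHomComp, jacobiSum_ringHomComp, star_jacobi hχ, ZMod.card] at H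
  have H2 : GaussianInt.toComplex (jacobiSum χ (χ ^ 2) * star (jacobiSum χ (χ ^ 2)))
      = GaussianInt.toComplex ((p : ℤ) : GaussianInt) := by
    rw [map_mul, H, map_intCast]
    norm_cast
  have H3 := hfinj H2
  have H4 := Zsqrtd.norm_eq_mul_conj (jacobiSum χ (χ ^ 2))
  rw [H3] at H4
  have := congrArg Zsqrtd.re H4
  simpa using this

lemma jacobi_primary (hp4 : p % 4 = 1) {χ : MulChar (ZMod p) GaussianInt} (hχ : orderOf χ = 4) :
    lam ∣ jacobiSum χ (χ ^ 2) + 1 := by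
  have hp : p.Prime := Fact.out
  have hplt := hp.one_lt
  have hp5 : 5 ≤ p := by
    rcases Nat.lt_or_ge p 5 with h | h
    · interval_cases p <;> omega
    · exact h
  have h20 : (2 : ZMod p) ≠ 0 := by
    intro h
    have h2 : ((2:ℕ) : ZMod p) = 0 := by exact_mod_cast h
    rw [ZMod.natCast_eq_zero_iff] at h2
    have := Nat.le_of_dvd (by norm_num) h2
    omega
  set c : ZMod p := (2 : ZMod p)⁻¹ with hc
  have h2c : (2 : ZMod p) * c = 1 := mul_inv_cancel₀ h20
  have hc0 : c ≠ 0 := by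
    intro h; rw [h, mul_zero] at h2c; exact one_ne_zero h2c.symm
  have hm1sq : χ (-1) * χ (-1) = 1 := by
    rw [← map_mul]; norm_num
  -- Step A : J(χ, χ²) = χ(-1) * J(χ, χ)
  have hmem : ∀ t : ZMod p, t ∈ (Finset.univ \ {0,1} : Finset (ZMod p)) ↔ (t ≠ 0 ∧ t ≠ 1) := by
    intro t; simp [Finset.mem_sdiff]
  have hmap : ∀ t : ZMod p, t ≠ 0 → t ≠ 1 → (t / (t-1) ≠ 0 ∧ t / (t-1) ≠ 1) := by
    intro t ht0 ht1
    have hs : t - 1 ≠ 0 := sub_ne_zero.mpr ht1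
    refine ⟨div_ne_zero ht0 hs, fun h => ?_⟩
    rw [div_eq_one_iff_eq hs] at h
    exact one_ne_zero (by linear_combination h : (1 : ZMod p) = 0)
  have hinv : ∀ t : ZMod p, t ≠ 0 → t ≠ 1 → (t/(t-1))/((t/(t-1)) - 1) = t := by
    intro t ht0 ht1
    have hs : t - 1 ≠ 0 := sub_ne_zero.mpr ht1
    have e1 : t/(t-1) - 1 = 1/(t-1) := by
      rw [div_sub' hs]
      congr 1
      ring
    rw [e1, div_div_eq_mul_div, div_one, div_mul_cancel₀ _ hs]
  have key : ∀ t : ZMod p, t ≠ 0 → t ≠ 1 →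
      χ (t/(t-1)) * (χ^2) (1 - t/(t-1)) = χ (-1) * (χ t * χ (1 - t)) := by
    intro t ht0 ht1
    have hs : t - 1 ≠ 0 := sub_ne_zero.mpr ht1
    have hsi : (t - 1)⁻¹ ≠ 0 := inv_ne_zero hs
    have e1 : 1 - t/(t-1) = -1 * (t-1)⁻¹ := by
      rw [div_eq_mul_inv]
      field_simp
      ring
    have e2 : t/(t-1) = t * (t-1)⁻¹ := div_eq_mul_inv t _
    rw [e1, e2, map_mul, MulChar.pow_apply' _ (by norm_num), map_mul]
    have hA4 : (χ (t-1)⁻¹)^4 = 1 := val_pow_four hχ hsi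
    have hAs : χ (t-1)⁻¹ * χ (t-1) = 1 := by
      rw [← map_mul, inv_mul_cancel₀ hs, map_one]
    have h1t : χ (1 - t) = χ (-1) * χ (t - 1) := by
      rw [← map_mul]; congr 1; ring
    rw [h1t]
    have hA3 : (χ (t-1)⁻¹)^3 = χ (t-1) := by
      calc (χ (t-1)⁻¹)^3 = (χ (t-1)⁻¹)^3 * (χ (t-1)⁻¹ * χ (t-1)) := by rw [hAs, mul_one]
      _ = (χ (t-1)⁻¹)^4 * χ (t-1) := by ring
      _ = χ (t-1) := by rw [hA4, one_mul]
    linear_combination (χ (-1) * χ (-1) * χ t) * hA3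
  have stepA : jacobiSum χ (χ ^ 2) = χ (-1) * jacobiSum χ χ := by
    rw [jacobiSum_eq_sum_sdiff, jacobiSum_eq_sum_sdiff, Finset.mul_sum]
    refine Finset.sum_nbij' (fun t => t / (t - 1)) (fun t => t / (t - 1)) ?_ ?_ ?_ ?_ ?_
    · intro a ha
      obtain ⟨h0, h1⟩ := (hmem a).mp ha
      exact (hmem _).mpr (hmap a h0 h1)
    · intro a ha
      obtain ⟨h0, h1⟩ := (hmem a).mp ha
      exact (hmem _).mpr (hmap a h0 h1)
    · intro a ha
      obtain ⟨h0, h1⟩ := (hmem a).mp ha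
      exact hinv a h0 h1
    · intro a ha
      obtain ⟨h0, h1⟩ := (hmem a).mp ha
      exact hinv a h0 h1
    · intro a ha
      obtain ⟨h0, h1⟩ := (hmem a).mp ha
      obtain ⟨h0', h1'⟩ := hmap a h0 h1
      have hk := key _ h0' h1'
      rw [hinv a h0 h1] at hk
      exact hk
  -- Step B : J(χ,χ) = ∑ χ(c² - s²)
  have stepB : jacobiSum χ χ = ∑ s : ZMod p, χ (c^2 - s^2) := by
    rw [jacobiSum]
    refine (Fintype.sum_equiv (Equiv.addRight c) (fun s => χ (c^2 - s^2))
      (fun t => χ t * χ (1 - t)) fun s => ?_).symm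
    show χ (c^2 - s^2) = χ (s + c) * χ (1 - (s + c))
    rw [← map_mul]
    congr 1
    linear_combination (s + c) * h2c
  -- Step C
  have hcnc : c ≠ -c := by
    intro h
    have h2 : (2:ZMod p) * c = 0 := by linear_combination h
    exact one_ne_zero (h2c.symm.trans h2)
  have h0B : (0:ZMod p) ∉ ({c, -c} : Finset (ZMod p)) := by
    simp only [Finset.mem_insert, Finset.mem_singleton]
    push_neg
    exact ⟨Ne.symm hc0, fun h => hc0 (neg_eq_zero.mp h.symm)⟩
  have hcB : c ∉ ({-c} : Finset (ZMod p)) := by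
    simpa using hcnc
  set B : Finset (ZMod p) := {0, c, -c} with hB
  have hBcard : B.card = 3 := by
    rw [hB, Finset.card_insert_of_notMem h0B, Finset.card_insert_of_notMem hcB,
      Finset.card_singleton]
  set A : Finset (ZMod p) := Finset.univ \ B with hA
  have hmemA : ∀ x : ZMod p, x ∈ A ↔ (x ≠ 0 ∧ x ≠ c ∧ x ≠ -c) := by
    intro x
    simp only [hA, hB, Finset.mem_sdiff, Finset.mem_univ, true_and, Finset.mem_insert,
      Finset.mem_singleton]
    push_neg
    tauto
  have hsplit : ∑ s : ZMod p, χ (c^2 - s^2)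
      = χ (c^2) + ∑ s ∈ A, χ (c^2 - s^2) := by
    rw [← Finset.sum_sdiff (Finset.subset_univ B), ← hA]
    have hBsum : ∑ s ∈ B, χ (c^2 - s^2) = χ (c^2) := by
      rw [hB, Finset.sum_insert h0B, Finset.sum_insert hcB, Finset.sum_singleton,
        show c^2 - (0:ZMod p)^2 = c^2 by ring, show c^2 - c^2 = 0 by ring,
        show c^2 - (-c)^2 = 0 by ring, MulChar.map_zero]
      ring
    rw [hBsum]
    ring
  have hAcard : A.card = p - 3 := by
    rw [hA, Finset.card_sdiff_of_subset (Finset.subset_univ B), hBcard, Finset.card_univ, ZMod.card]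
  set D : GaussianInt := ∑ s ∈ A, (χ (c^2 - s^2) - 1) with hD
  have hDdvd : lam ∣ D := by
    rw [lam_dvd_iff, hD]
    have heq : ∑ s ∈ A, (χ (c^2 - s^2) - 1)
        = ∑ t ∈ A.image (fun s => s^2),
            (A.filter (fun s => s^2 = t)).card • (χ (c^2 - t) - 1) :=
      Finset.sum_comp (fun t => χ (c^2 - t) - 1) (fun s : ZMod p => s^2)
    rw [heq]
    refine Finset.dvd_sum fun t ht => ?_
    obtain ⟨s₀, hs₀A, hs₀⟩ := Finset.mem_image.mp ht
    obtain ⟨h1, h2, h3⟩ := (hmemA s₀).mp hs₀A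
    have hs₀ne : s₀ ≠ -s₀ := by
      intro h
      have h2s : (2:ZMod p) * s₀ = 0 := by linear_combination h
      rcases mul_eq_zero.mp h2s with h' | h'
      · exact h20 h'
      · exact h1 h'
    have hfiber : A.filter (fun s => s^2 = t) = {s₀, -s₀} := by
      ext x
      simp only [Finset.mem_filter, Finset.mem_insert, Finset.mem_singleton]
      constructor
      · rintro ⟨hxA, hxt⟩
        have hfac : (x - s₀) * (x + s₀) = 0 := by
          linear_combination hxt - hs₀
        rcases mul_eq_zero.mp hfac with h | h
        · exact Or.inl (sub_eq_zero.mp h)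
        · exact Or.inr (eq_neg_of_add_eq_zero_left h)
      · rintro (rfl | rfl)
        · exact ⟨hs₀A, hs₀⟩
        · refine ⟨(hmemA _).mpr ⟨neg_ne_zero.mpr h1, fun h => h3 ?_, fun h => h2 ?_⟩, ?_⟩
          · rw [← neg_neg s₀, h]
          · exact neg_injective h
          · rw [neg_pow, hs₀]
            norm_num
    have hcard2 : (A.filter (fun s => s^2 = t)).card = 2 := by
      rw [hfiber, Finset.card_insert_of_notMem (by simpa using hs₀ne), Finset.card_singleton]
    rw [hcard2]
    have hct : c^2 - t ≠ 0 := by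
      intro h
      have hfac : (s₀ - c) * (s₀ + c) = 0 := by
        linear_combination hs₀ - h
      rcases mul_eq_zero.mp hfac with h' | h'
      · exact h2 (sub_eq_zero.mp h')
      · exact h3 (eq_neg_of_add_eq_zero_left h')
    obtain ⟨w, hw⟩ := one_sub_II_dvd (val_pow_four hχ hct)
    refine ⟨w, ?_⟩
    rw [nsmul_eq_mul, hw]
    push_cast
    ring
  have hDsum : ∑ s ∈ A, χ (c^2 - s^2) = D + ((p - 3 : ℕ) : GaussianInt) := by
    rw [hD, Finset.sum_sub_distrib, Finset.sum_const, hAcard, nsmul_eq_mul, mul_one]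
    ring
  -- value of χ(-1) * χ(c²)
  have hone : χ (-1) * χ (c^2) = 1 := by
    obtain ⟨u, hu⟩ := ZMod.exists_sq_eq_neg_one_iff.mpr (show p % 4 ≠ 3 by omega)
    have hη : (1 + u) ≠ 0 := by
      intro h
      have hu1 : u = -1 := by linear_combination h
      rw [hu1] at hu
      have h2 : (2 : ZMod p) = 0 := by linear_combination -hu
      exact h20 h2
    have hη4 : (1+u)^4 = -4 := by
      have hsq : (1+u)^2 = 2*u := by linear_combination -hu
      calc (1+u)^4 = ((1+u)^2)^2 := by ring
      _ = (2*u)^2 := by rw [hsq]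
      _ = -4 := by linear_combination -4 * hu
    have hχη : (χ (1+u))^4 = 1 := val_pow_four hχ hη
    have hprod : χ (-(c^2)) * (χ (1+u))^4 = 1 := by
      rw [← map_pow, ← map_mul]
      have harg : -(c^2) * (1+u)^4 = 1 := by
        rw [hη4]
        linear_combination (2*c+1)*h2c
      rw [harg, map_one]
    calc χ (-1) * χ (c^2) = χ (-(c^2)) := by rw [← map_mul]; congr 1; ring
    _ = χ (-(c^2)) * (χ (1+u))^4 := by rw [hχη, mul_one]
    _ = 1 := hprod
  -- assemble
  rw [stepA, stepB, hsplit, hDsum]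
  rcases mul_self_eq_one_iff.mp hm1sq with hs1 | hs1
  · have hχc : χ (c^2) = 1 := by
      rw [hs1, one_mul] at hone; exact hone
    have h3p : 3 ≤ p := by omega
    have hre : χ (-1) * (χ (c^2) + (D + ((p - 3 : ℕ) : GaussianInt))) + 1
        = D + (((p - 3 : ℕ) : GaussianInt) + 2) := by
      rw [hs1, hχc]; ring
    rw [hre]
    refine dvd_add hDdvd ?_
    have h5 := lam_dvd_intCast (n := ((p:ℤ) - 1)) (by omega)
    have hcast : (((p:ℤ) - 1 : ℤ) : GaussianInt) = ((p - 3 : ℕ) : GaussianInt) + 2 := by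
      push_cast [Nat.cast_sub h3p]
      ring
    rwa [hcast] at h5
  · have hχc : χ (c^2) = -1 := by
      rw [hs1] at hone; linear_combination -hone
    have h3p : 3 ≤ p := by omega
    have hre : χ (-1) * (χ (c^2) + (D + ((p - 3 : ℕ) : GaussianInt))) + 1
        = -D + (2 - ((p - 3 : ℕ) : GaussianInt)) := by
      rw [hs1, hχc]; ring
    rw [hre]
    refine dvd_add (dvd_neg.mpr hDdvd) ?_
    have h5 := lam_dvd_intCast (n := (5 - (p:ℤ))) (by omega)
    have hcast : ((5 - (p:ℤ) : ℤ) : GaussianInt) = 2 - ((p - 3 : ℕ) : GaussianInt) := by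
      push_cast [Nat.cast_sub h3p]
      ring
    rwa [hcast] at h5

lemma count_eq :
    {q : ZMod p × ZMod p | q.2 ^ 2 = q.1 ^ 3 - q.1}.ncard
      = ∑ x : ZMod p, (Finset.univ.filter (fun y : ZMod p => y ^ 2 = x ^ 3 - x)).card := by
  classical
  rw [Set.ncard_eq_toFinset_card', Set.toFinset_setOf]
  rw [Finset.card_eq_sum_card_fiberwise (f := Prod.fst) (t := Finset.univ)
    (fun q _ => Finset.mem_univ _)]
  refine Finset.sum_congr rfl fun x _ => ?_
  refine Finset.card_bij' (fun q _ => q.2) (fun y _ => (x, y)) ?_ ?_ ?_ ?_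
  · intro q hq
    simp only [Finset.mem_filter, Finset.mem_univ, true_and] at hq ⊢
    obtain ⟨h1, h2⟩ := hq
    rw [← h2]
    exact h1
  · intro y hy
    simp only [Finset.mem_filter, Finset.mem_univ, true_and] at hy ⊢
    exact ⟨hy, trivial⟩
  · intro q hq
    simp only [Finset.mem_filter, Finset.mem_univ, true_and] at hq
    exact Prod.ext hq.2.symm rfl
  · intro y hy
    rfl

lemma filter_eq_toFinset (c : ZMod p) :
    {x : ZMod p | x ^ 2 = c}.toFinset = Finset.univ.filter fun y => y ^ 2 = c := by
  ext y; simp [Set.mem_toFinset]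

end Char

end Stmt19Aux

open Stmt19Aux in
theorem stmt_19 (p : ℕ) (hp : p.Prime) :
    (p % 4 = 1 → ∀ a b : ℤ, Odd a → (p : ℤ) = a ^ 2 + b ^ 2 →
      ((⟨2, 2⟩ : GaussianInt) ∣ (⟨a, b⟩ : GaussianInt) - 1) →
      ({q : ZMod p × ZMod p | q.2 ^ 2 = q.1 ^ 3 - q.1}.ncard : ℤ) = p - 2 * a) ∧
    (p % 4 = 3 →
      {q : ZMod p × ZMod p | q.2 ^ 2 = q.1 ^ 3 - q.1}.ncard = p) := by
  haveI : Fact p.Prime := ⟨hp⟩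
  constructor
  · -- p ≡ 1 mod 4
    intro hp4 a b ha hab hdvd
    have hp2 : p ≠ 2 := fun h => by rw [h] at hp4; norm_num at hp4
    have hdvd4 : (4:ℕ) ∣ Fintype.card (ZMod p) - 1 := by
      rw [ZMod.card]; omega
    obtain ⟨χ, hχ⟩ := MulChar.exists_mulChar_orderOf (ZMod p) hdvd4 isPrimitiveRoot_II
    set J := jacobiSum χ (χ ^ 2) with hJ
    set N := {q : ZMod p × ZMod p | q.2 ^ 2 = q.1 ^ 3 - q.1}.ncard with hN
    -- counting
    have n3 : (N : GaussianInt) = (p : GaussianInt) + (J + star J) := by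
      rw [hN, count_eq]
      push_cast
      calc ∑ x : ZMod p, ((Finset.univ.filter (fun y : ZMod p => y ^ 2 = x ^ 3 - x)).card : GaussianInt)
          = ∑ x : ZMod p, (1 + (χ ^ 2) (x ^ 3 - x)) := by
            exact Finset.sum_congr rfl fun x _ => card_sqrt hp2 hχ _
        _ = ∑ x : ZMod p, (1 : GaussianInt) + ∑ x : ZMod p, (χ ^ 2) (x ^ 3 - x) :=
            Finset.sum_add_distrib
        _ = (p : GaussianInt) + (J + star J) := by
            rw [Finset.sum_const, Finset.card_univ, ZMod.card, nsmul_eq_mul, mul_one,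
              sum_curve_eq hp4 hχ, star_jacobi hχ]
    -- uniqueness: a = -J.re
    have hare : a = - J.re := by
      have hnormJ : (-J).norm = (p:ℤ) := by
        rw [Zsqrtd.norm_neg, jacobi_norm hp4 hχ]
      have hnormπ : (⟨a, b⟩ : GaussianInt).norm = (p:ℤ) := by
        rw [Zsqrtd.norm_def, hab]; ring
      have hd' : lam ∣ -J - 1 := by
        obtain ⟨w, hw⟩ := jacobi_primary hp4 hχ
        exact ⟨-w, by rw [show -J - 1 = -(J+1) by ring, hw]; ring⟩
      have hpo : p % 2 = 1 := by omega
      have := re_unique hp hpo hnormπ hnormJ hdvd hd'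
      simpa [Zsqrtd.re_neg] using this
    -- descend to ℤ
    have final : (N : GaussianInt) = (((p : ℤ) - 2 * a : ℤ) : GaussianInt) := by
      rw [n3]
      have hstar : J + star J = ((2 * J.re : ℤ) : GaussianInt) := by
        ext
        · simp [Zsqrtd.re_add, Zsqrtd.re_star, Zsqrtd.re_intCast]; ring
        · simp [Zsqrtd.im_add, Zsqrtd.im_star, Zsqrtd.im_intCast]
      rw [hstar, hare]
      push_cast
      ring
    have := congrArg Zsqrtd.re final
    simpa using this
  · -- p ≡ 3 mod 4
    intro hp4
    have hp2 : p ≠ 2 := fun h => by rw [h] at hp4; norm_num at hp4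
    have hchar : ringChar (ZMod p) ≠ 2 := by rw [ZMod.ringChar_zmod_n]; exact hp2
    have hcard : ∀ c : ZMod p,
        (((Finset.univ.filter fun y : ZMod p => y ^ 2 = c).card : ℤ))
          = quadraticChar (ZMod p) c + 1 := by
      intro c
      have h := quadraticChar_card_sqrts hchar c
      rwa [filter_eq_toFinset] at h
    have hns : ¬ IsSquare (-1 : ZMod p) := by
      intro hsq
      exact (ZMod.exists_sq_eq_neg_one_iff.mp hsq) hp4
    have hsum : ∑ x : ZMod p, quadraticChar (ZMod p) (x ^ 3 - x) = 0 := by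
      have he : ∑ x : ZMod p, quadraticChar (ZMod p) (x ^ 3 - x)
          = - ∑ x : ZMod p, quadraticChar (ZMod p) (x ^ 3 - x) := by
        calc ∑ x : ZMod p, quadraticChar (ZMod p) (x ^ 3 - x)
            = ∑ x : ZMod p, (- quadraticChar (ZMod p) (x ^ 3 - x)) := by
              refine Fintype.sum_equiv (Equiv.neg (ZMod p))
                (fun x => quadraticChar (ZMod p) (x ^ 3 - x))
                (fun x => - quadraticChar (ZMod p) (x ^ 3 - x)) fun x => ?_
              show quadraticChar (ZMod p) (x ^ 3 - x)
                  = - quadraticChar (ZMod p) ((-x) ^ 3 - (-x))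
              have harg : (-x) ^ 3 - (-x) = -1 * (x ^ 3 - x) := by ring
              rw [harg, map_mul, quadraticChar_neg_one_iff_not_isSquare.mpr hns]
              ring
          _ = - ∑ x : ZMod p, quadraticChar (ZMod p) (x ^ 3 - x) := by
              rw [Finset.sum_neg_distrib]
      omega
    have final : ({q : ZMod p × ZMod p | q.2 ^ 2 = q.1 ^ 3 - q.1}.ncard : ℤ) = (p : ℤ) := by
      rw [count_eq]
      push_cast
      calc ∑ x : ZMod p, ((Finset.univ.filter (fun y : ZMod p => y ^ 2 = x ^ 3 - x)).card : ℤ)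
          = ∑ x : ZMod p, (quadraticChar (ZMod p) (x ^ 3 - x) + 1) :=
            Finset.sum_congr rfl fun x _ => hcard _
        _ = ∑ x : ZMod p, quadraticChar (ZMod p) (x ^ 3 - x) + ∑ x : ZMod p, (1:ℤ) :=
            Finset.sum_add_distrib
        _ = (p : ℤ) := by
            rw [hsum, Finset.sum_const, Finset.card_univ, ZMod.card, nsmul_eq_mul, mul_one,
              zero_add]
    exact_mod_cast final
end
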